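/- Under the MHR assumption, the threshold function λ is continuous on T, λ(t̲) > q̲, and λ(t̄) < q̄. Consequently, with t1 = inf{t ∈ T : λ(t) < q̄} and t2 = sup{t ∈ T : λ(t) > q̲}, one has t̲ ≤ t1 < t2 ≤ t̄. -/

import Mathlib

/-!
For fixed `t`, `q ↦ η q t = α q (t - d t) - r` crosses zero at most once, and from below:
if `η q t ≥ 0` then `t - d t > 0` because `r > 0`, so `η q' t > η q t` for `q' > q`. Hence
`λ t` is the point where `η (·, t)` changes sign. For each fixed `q` the sign of `η q ·` is
locally constant wherever it is nonzero, since `d` is continuous; this traps `λ` near `λ t₀`,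
so `λ` is continuous. At the endpoints, `d t̲ > 0` and `d t̄ = 0` give `η q̲ t̲ < 0 < η q̄ t̄`,
whence `q̲ < λ t̲` and `λ t̄ < q̄`, and `t₁ < t₂` follows from continuity of `λ` near `t₁`.
-/

open MeasureTheory Set

open Filter Topology

section Threshold

variable {X Q R : Type*} [TopologicalSpace X] [LinearOrder Q] [TopologicalSpace R]
  [LinearOrder R] [OrderClosedTopology R] {S : Set Q} {s : Set X} {g : X → Q} {η : Q → X → R}
  {c : R}

theorem eventually_lt_of_threshold [DenselyOrdered Q] (hS : S.OrdConnected) (hg : MapsTo g s S)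
    {t₀ : X} (ht₀ : t₀ ∈ s) (hη : ∀ q ∈ S, ContinuousWithinAt (η q) s t₀)
    (hbelow : ∀ q ∈ S, q < g t₀ → η q t₀ < c)
    (habove : ∀ t ∈ s, ∀ q ∈ S, g t < q → c < η q t) :
    ∀ b < g t₀, ∀ᶠ t in 𝓝[s] t₀, b < g t := by
  intro b hb
  by_cases hmin : ∃ q₁ ∈ S, q₁ < g t₀
  · obtain ⟨q₁, hq₁S, hq₁⟩ := hmin
    obtain ⟨q, hq, hqg⟩ := exists_between (max_lt hb hq₁)
    have hqS : q ∈ S := hS.out hq₁S (hg ht₀) ⟨(le_max_right _ _).trans hq.le, hqg.le⟩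
    filter_upwards [(hη q hqS).eventually_lt_const (hbelow q hqS hqg), self_mem_nhdsWithin]
      with t hηt ht
    have hqt : q ≤ g t := not_lt.1 fun hlt => (habove t ht q hqS hlt).not_gt hηt
    exact (le_max_left _ _).trans_lt (hq.trans_le hqt)
  · push Not at hmin
    filter_upwards [self_mem_nhdsWithin] with t ht
    exact hb.trans_le (hmin _ (hg ht))

theorem continuousOn_of_threshold [DenselyOrdered Q] [TopologicalSpace Q] [OrderTopology Q]
    (hS : S.OrdConnected) (hg : MapsTo g s S) (hη : ∀ q ∈ S, ContinuousOn (η q) s)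
    (hbelow : ∀ t ∈ s, ∀ q ∈ S, q < g t → η q t < c)
    (habove : ∀ t ∈ s, ∀ q ∈ S, g t < q → c < η q t) :
    ContinuousOn g s := fun t₀ ht₀ =>
  tendsto_order.2
    ⟨eventually_lt_of_threshold hS hg ht₀ (fun q hq => hη q hq t₀ ht₀) (hbelow t₀ ht₀) habove,
      eventually_lt_of_threshold (Q := Qᵒᵈ) (R := Rᵒᵈ) hS.dual hg ht₀
        (fun q hq => hη q hq t₀ ht₀) (habove t₀ ht₀) hbelow⟩

end Threshold

def SingleCrossingOn (φ : ℝ → ℝ) (S : Set ℝ) : Prop :=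
  ∀ q ∈ S, ∀ q' ∈ S, q < q' → 0 ≤ φ q → 0 < φ q'

def IsThreshold (φ : ℝ → ℝ) (a b l : ℝ) : Prop :=
  ((∀ q ∈ Icc a b, 0 < φ q) → l = a) ∧ (∀ q ∈ Icc a b, φ q = 0 → l = q) ∧
    ((∀ q ∈ Icc a b, φ q < 0) → l = b)

namespace IsThreshold

variable {φ : ℝ → ℝ} {a b l : ℝ}

theorem trichotomy (h : IsThreshold φ a b l) (hφ : ContinuousOn φ (Icc a b)) :
    (l = a ∧ ∀ q ∈ Icc a b, 0 < φ q) ∨ (l ∈ Icc a b ∧ φ l = 0) ∨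
      (l = b ∧ ∀ q ∈ Icc a b, φ q < 0) := by
  by_cases hzero : ∃ q ∈ Icc a b, φ q = 0
  · obtain ⟨q, hq, hφq⟩ := hzero
    obtain rfl := h.2.1 q hq hφq
    exact Or.inr (Or.inl ⟨hq, hφq⟩)
  push Not at hzero
  by_cases hpos : ∀ q ∈ Icc a b, 0 < φ q
  · exact Or.inl ⟨h.1 hpos, hpos⟩
  obtain ⟨q₁, hq₁, hφq₁⟩ := not_forall₂.1 hpos
  have hneg : ∀ q ∈ Icc a b, φ q < 0 := fun q hq => by
    by_contra! hφq
    obtain ⟨q₀, hq₀, hφq₀⟩ :=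
      isPreconnected_Icc.intermediate_value hq₁ hq hφ ⟨not_lt.1 hφq₁, hφq⟩
    exact hzero q₀ hq₀ hφq₀
  exact Or.inr (Or.inr ⟨h.2.2 hneg, hneg⟩)

theorem neg_of_lt (h : IsThreshold φ a b l) (hφ : ContinuousOn φ (Icc a b))
    (hsc : SingleCrossingOn φ (Icc a b)) {q : ℝ} (hq : q ∈ Icc a b) (hql : q < l) :
    φ q < 0 := by
  by_contra! hφq
  rcases h.trichotomy hφ with ⟨rfl, -⟩ | ⟨hl, hφl⟩ | ⟨rfl, hneg⟩
  · exact hql.not_ge hq.1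
  · exact (hsc q hq l hl hql hφq).ne' hφl
  · have hlI : l ∈ Icc a l := ⟨hq.1.trans hq.2, le_rfl⟩
    exact (hsc q hq l hlI hql hφq).not_gt (hneg l hlI)

theorem pos_of_lt (h : IsThreshold φ a b l) (hφ : ContinuousOn φ (Icc a b))
    (hsc : SingleCrossingOn φ (Icc a b)) {q : ℝ} (hq : q ∈ Icc a b) (hlq : l < q) :
    0 < φ q := by
  rcases h.trichotomy hφ with ⟨-, hpos⟩ | ⟨hl, hφl⟩ | ⟨rfl, -⟩
  · exact hpos q hq
  · exact hsc l hl q hq hlq hφl.ge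
  · exact absurd hq.2 hlq.not_ge

theorem left_lt (h : IsThreshold φ a b l) (hφ : ContinuousOn φ (Icc a b)) (hab : a < b)
    (ha : φ a < 0) : a < l := by
  rcases h.trichotomy hφ with ⟨-, hpos⟩ | ⟨hl, hφl⟩ | ⟨rfl, -⟩
  · exact absurd (hpos a (left_mem_Icc.2 hab.le)) ha.not_gt
  · exact hl.1.lt_of_ne fun hal => ha.ne (hal ▸ hφl)
  · exact hab

theorem lt_right (h : IsThreshold φ a b l) (hφ : ContinuousOn φ (Icc a b)) (hab : a < b)
    (hb : 0 < φ b) : l < b := by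
  rcases h.trichotomy hφ with ⟨rfl, -⟩ | ⟨hl, hφl⟩ | ⟨-, hneg⟩
  · exact hab
  · exact hl.2.lt_of_ne fun hlb => hb.ne' (hlb ▸ hφl)
  · exact absurd (hneg b (right_mem_Icc.2 hab.le)) hb.not_gt

end IsThreshold

theorem StrictMonoOn.singleCrossingOn_mul_sub {α : ℝ → ℝ} {S : Set ℝ}
    (hα : StrictMonoOn α S) (hαpos : ∀ q ∈ S, 0 < α q) {r : ℝ} (hr : 0 < r) (k : ℝ) :
    SingleCrossingOn (fun q => α q * k - r) S := by
  intro q hq q' hq' hlt hφq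
  have hk : 0 < k := pos_of_mul_pos_right (by linarith) (hαpos q hq).le
  nlinarith [hα hq hq' hlt]

theorem exists_mem_Ioc_of_eventually {p : ℝ → Prop} {a b τ : ℝ} (hτ : τ ∈ Ico a b)
    (hp : ∀ᶠ t in 𝓝[Icc a b] τ, p t) : ∃ t ∈ Ioc τ b, p t := by
  have hsub : Ioc τ b ⊆ Icc a b := Ioc_subset_Icc_self.trans (Icc_subset_Icc_left hτ.1)
  have := left_nhdsWithin_Ioc_neBot hτ.2
  obtain ⟨t, hpt, ht⟩ := ((hp.filter_mono (nhdsWithin_mono τ hsub)).and self_mem_nhdsWithin).exists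
  exact ⟨t, ht, hpt⟩

theorem exists_mem_Ico_of_eventually {p : ℝ → Prop} {a b τ : ℝ} (hτ : τ ∈ Ioc a b)
    (hp : ∀ᶠ t in 𝓝[Icc a b] τ, p t) : ∃ t ∈ Ico a τ, p t := by
  have hsub : Ico a τ ⊆ Icc a b := Ico_subset_Icc_self.trans (Icc_subset_Icc_right hτ.2)
  have := right_nhdsWithin_Ico_neBot hτ.1
  obtain ⟨t, hpt, ht⟩ := ((hp.filter_mono (nhdsWithin_mono τ hsub)).and self_mem_nhdsWithin).exists
  exact ⟨t, ht, hpt⟩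

theorem csInf_lt_csSup_of_continuousOn {β : Type*} [LinearOrder β] [TopologicalSpace β]
    [OrderClosedTopology β] {g : ℝ → β} {a b : ℝ} {m M : β} (hab : a < b) (hmM : m < M)
    (hg : ContinuousOn g (Icc a b)) (ha : m < g a) (hb : g b < M) :
    sInf {t ∈ Icc a b | g t < M} < sSup {t ∈ Icc a b | m < g t} := by
  set t₁ := sInf {t ∈ Icc a b | g t < M}
  have hbdd : BddBelow {t ∈ Icc a b | g t < M} := ⟨a, fun _ ht => ht.1.1⟩
  have ha₁ : a ≤ t₁ := le_csInf ⟨b, right_mem_Icc.2 hab.le, hb⟩ fun _ ht => ht.1.1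
  have ht₁b : t₁ < b := by
    obtain ⟨t, ht, hgt⟩ := exists_mem_Ico_of_eventually (right_mem_Ioc.2 hab)
      ((hg b (right_mem_Icc.2 hab.le)).eventually_lt_const hb)
    exact (csInf_le hbdd ⟨Ico_subset_Icc_self ht, hgt⟩).trans_lt ht.2
  have ht₁ : t₁ ∈ Icc a b := ⟨ha₁, ht₁b.le⟩
  -- otherwise `g < M` on a left neighbourhood of `t₁`, below the infimum
  have hgt₁ : m < g t₁ := by
    rcases ha₁.eq_or_lt with hat₁ | hat₁
    · exact hat₁ ▸ ha
    by_contra! hle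
    obtain ⟨t, ht, hgt⟩ := exists_mem_Ico_of_eventually ⟨hat₁, ht₁b.le⟩
      ((hg t₁ ht₁).eventually_lt_const (hle.trans_lt hmM))
    exact (csInf_le hbdd ⟨⟨ht.1, ht.2.le.trans ht₁b.le⟩, hgt⟩).not_gt ht.2
  obtain ⟨t, ht, hgt⟩ := exists_mem_Ioc_of_eventually ⟨ha₁, ht₁b⟩
    ((hg t₁ ht₁).eventually_const_lt hgt₁)
  exact ht.1.trans_le (le_csSup ⟨b, fun _ ht => ht.1.2⟩ ⟨⟨ha₁.trans ht.1.le, ht.2⟩, hgt⟩)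

theorem stmt_4_general
    (tlo thi qlo qhi : ℝ) (htT : tlo < thi) (hqQ : qlo < qhi)
    (F f d : ℝ → ℝ)
    (hfpos : ∀ t ∈ Icc tlo thi, 0 < f t)
    (hF0 : F tlo = 0) (hF1 : F thi = 1)
    (hdDef : ∀ t ∈ Icc tlo thi, d t = (1 - F t) / f t)
    (d' : ℝ → ℝ)
    (hdDeriv : ∀ t ∈ Icc tlo thi, HasDerivAt d (d' t) t)
    (α α' : ℝ → ℝ)
    (hα : ∀ q ∈ Icc qlo qhi, HasDerivAt α (α' q) q)
    (hαpos : ∀ q ∈ Icc qlo qhi, 0 < α q)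
    (hα'pos : ∀ q ∈ Icc qlo qhi, 0 < α' q)
    (r : ℝ) (hr : 0 < r)
    (hlow : α qlo * tlo < r) (hhigh : r < α qhi * thi)
    (η : ℝ → ℝ → ℝ)
    (hη : ∀ q t, η q t = α q * (t - d t) - r)
    (lam : ℝ → ℝ)
    (hlamQ : ∀ t ∈ Icc tlo thi, lam t ∈ Icc qlo qhi)
    (hlamLo : ∀ t ∈ Icc tlo thi, (∀ q ∈ Icc qlo qhi, 0 < η q t) → lam t = qlo)
    (hlamMid : ∀ t ∈ Icc tlo thi, ∀ q0 ∈ Icc qlo qhi, η q0 t = 0 → lam t = q0)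
    (hlamHi : ∀ t ∈ Icc tlo thi, (∀ q ∈ Icc qlo qhi, η q t < 0) → lam t = qhi)
    :
    ContinuousOn lam (Icc tlo thi) ∧ qlo < lam tlo ∧ lam thi < qhi ∧
      (tlo ≤ sInf {t ∈ Icc tlo thi | lam t < qhi} ∧
        sInf {t ∈ Icc tlo thi | lam t < qhi} < sSup {t ∈ Icc tlo thi | qlo < lam t} ∧
        sSup {t ∈ Icc tlo thi | qlo < lam t} ≤ thi) := by
  obtain rfl : η = fun q t => α q * (t - d t) - r := funext₂ hη
  have htlo : tlo ∈ Icc tlo thi := left_mem_Icc.2 htT.le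
  have hthi : thi ∈ Icc tlo thi := right_mem_Icc.2 htT.le
  have hαc : ContinuousOn α (Icc qlo qhi) := fun q hq =>
    (hα q hq).continuousAt.continuousWithinAt
  have hαmono : StrictMonoOn α (Icc qlo qhi) :=
    strictMonoOn_of_hasDerivWithinAt_pos (convex_Icc _ _) hαc
      (fun q hq => (hα q (interior_subset hq)).hasDerivWithinAt)
      fun q hq => hα'pos q (interior_subset hq)
  have hd : ContinuousOn d (Icc tlo thi) := fun t ht =>
    (hdDeriv t ht).continuousAt.continuousWithinAt
  have hcq : ∀ t, ContinuousOn (fun q => α q * (t - d t) - r) (Icc qlo qhi) := fun t =>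
    (hαc.mul continuousOn_const).sub continuousOn_const
  have hct : ∀ q, ContinuousOn (fun t => α q * (t - d t) - r) (Icc tlo thi) := fun q =>
    (continuousOn_const.mul (continuousOn_id.sub hd)).sub continuousOn_const
  have hsc t := hαmono.singleCrossingOn_mul_sub hαpos hr (t - d t)
  have hthr : ∀ t ∈ Icc tlo thi, IsThreshold (fun q => α q * (t - d t) - r) qlo qhi (lam t) :=
    fun t ht => ⟨hlamLo t ht, hlamMid t ht, hlamHi t ht⟩
  have hcont : ContinuousOn lam (Icc tlo thi) :=
    continuousOn_of_threshold ordConnected_Icc hlamQ (fun q _ => hct q)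
      (fun t ht _ hq => (hthr t ht).neg_of_lt (hcq t) (hsc t) hq)
      fun t ht _ hq => (hthr t ht).pos_of_lt (hcq t) (hsc t) hq
  have hdlo : 0 < d tlo := by
    rw [hdDef tlo htlo, hF0, sub_zero]
    exact one_div_pos.2 (hfpos tlo htlo)
  have hdhi : d thi = 0 := by rw [hdDef thi hthi, hF1, sub_self, zero_div]
  have hlo : qlo < lam tlo := (hthr tlo htlo).left_lt (hcq tlo) hqQ <| by
    nlinarith [mul_pos (hαpos qlo (left_mem_Icc.2 hqQ.le)) hdlo]
  have hhi : lam thi < qhi := (hthr thi hthi).lt_right (hcq thi) hqQ <| by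
    rw [hdhi, sub_zero]
    linarith
  exact ⟨hcont, hlo, hhi, le_csInf ⟨thi, hthi, hhi⟩ fun _ ht => ht.1.1,
    csInf_lt_csSup_of_continuousOn htT hqQ hcont hlo hhi,
    csSup_le ⟨tlo, htlo, hlo⟩ fun _ ht => ht.1.2⟩

theorem stmt_4
    (tlo thi qlo qhi : ℝ) (htT : tlo < thi) (hqQ : qlo < qhi)
    (F f d : ℝ → ℝ)
    (hF : ∀ t ∈ Icc tlo thi, HasDerivAt F (f t) t)
    (hfpos : ∀ t ∈ Icc tlo thi, 0 < f t)
    (hF0 : F tlo = 0) (hF1 : F thi = 1)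
    (hdDef : ∀ t ∈ Icc tlo thi, d t = (1 - F t) / f t)
    (d' : ℝ → ℝ)
    (hdDeriv : ∀ t ∈ Icc tlo thi, HasDerivAt d (d' t) t)
    (hMHR : ∀ t ∈ Icc tlo thi, d' t ≤ 0)
    (α α' : ℝ → ℝ)
    (hα : ∀ q ∈ Icc qlo qhi, HasDerivAt α (α' q) q)
    (hαpos : ∀ q ∈ Icc qlo qhi, 0 < α q)
    (hα'pos : ∀ q ∈ Icc qlo qhi, 0 < α' q)
    (r : ℝ) (hr : 0 < r)
    (hlow : α qlo * tlo < r) (hhigh : r < α qhi * thi)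
    (η : ℝ → ℝ → ℝ)
    (hη : ∀ q t, η q t = α q * (t - d t) - r)
    (lam : ℝ → ℝ)
    (hlamQ : ∀ t ∈ Icc tlo thi, lam t ∈ Icc qlo qhi)
    (hlamLo : ∀ t ∈ Icc tlo thi, (∀ q ∈ Icc qlo qhi, 0 < η q t) → lam t = qlo)
    (hlamMid : ∀ t ∈ Icc tlo thi, ∀ q0 ∈ Icc qlo qhi, η q0 t = 0 → lam t = q0)
    (hlamHi : ∀ t ∈ Icc tlo thi, (∀ q ∈ Icc qlo qhi, η q t < 0) → lam t = qhi)
    :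
    ContinuousOn lam (Icc tlo thi) ∧ qlo < lam tlo ∧ lam thi < qhi ∧
      (tlo ≤ sInf {t ∈ Icc tlo thi | lam t < qhi} ∧
        sInf {t ∈ Icc tlo thi | lam t < qhi} < sSup {t ∈ Icc tlo thi | qlo < lam t} ∧
        sSup {t ∈ Icc tlo thi | qlo < lam t} ≤ thi) :=
  stmt_4_general tlo thi qlo qhi htT hqQ F f d hfpos hF0 hF1 hdDef d' hdDeriv α α' hα hαpos hα'pos r
    hr hlow hhigh η hη lam hlamQ hlamLo hlamMid hlamHi
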